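/- arXiv:2405.05719 — 3 statements merged into one kernel-verified Lean document; each statement's English description precedes it below -/
import Mathlib

section
/- Let β = (n₁, ..., n_r) and γ = (m₁, ..., m_s) be compositions of n with respective blocks I₁, ..., I_r and J₁, ..., J_s, and let w be a permutation of [1, n] that is increasing on each I_i and whose inverse is increasing on each J_j. Then for every i and j, the set w(I_i) ∩ J_j is an interval of consecutive integers (possibly empty). -/
/-- The offset of the `i`-th block of the composition `β`. -/
def offsetOf {r : ℕ} (β : Fin r → ℕ) (i : Fin r) : ℕ :=
  ∑ j ∈ Finset.univ.filter (fun j => j < i), β j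

/-- The `i`-th block of the composition `β` of `n`, as a subset of `Fin n`. -/
def blockOf (n : ℕ) {r : ℕ} (β : Fin r → ℕ) (i : Fin r) : Set (Fin n) :=
  {k | offsetOf β i ≤ (k : ℕ) ∧ (k : ℕ) < offsetOf β i + β i}

/-- `f` is increasing on the set `S`. -/
def IncOn {n : ℕ} (f : Fin n → Fin n) (S : Set (Fin n)) : Prop :=
  ∀ x ∈ S, ∀ y ∈ S, x < y → f x < f y

theorem stmt5 (n r s : ℕ) (β : Fin r → ℕ) (γ : Fin s → ℕ)
    (hβ : ∑ i, β i = n) (hγ : ∑ j, γ j = n)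
    (w : Equiv.Perm (Fin n))
    (hw : ∀ i, IncOn w (blockOf n β i))
    (hw' : ∀ j, IncOn w.symm (blockOf n γ j))
    (i : Fin r) (j : Fin s) :
    ∃ c d : ℕ,
      {k : Fin n | k ∈ blockOf n γ j ∧ w.symm k ∈ blockOf n β i} =
        {k : Fin n | c ≤ (k : ℕ) ∧ (k : ℕ) ≤ d} := by
  classical
  set S : Set (Fin n) := {k | k ∈ blockOf n γ j ∧ w.symm k ∈ blockOf n β i} with hS
  rcases S.eq_empty_or_nonempty with hE | hNE
  · refine ⟨1, 0, ?_⟩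
    rw [hE]; ext k; simp only [Set.mem_empty_iff_false, Set.mem_setOf_eq, false_iff]
    omega
  · have hfin : S.Finite := Set.toFinite S
    obtain ⟨a, haS, hamin⟩ := Set.exists_min_image S id hfin hNE
    obtain ⟨b, hbS, hbmax⟩ := Set.exists_max_image S id hfin hNE
    refine ⟨a, b, ?_⟩
    ext k
    simp only [hS, Set.mem_setOf_eq]
    constructor
    · intro hk
      exact ⟨hamin k hk, hbmax k hk⟩
    · rintro ⟨hc, hd⟩
      have hak : a ≤ k := hc
      have hkb : k ≤ b := hd
      have hkγ : k ∈ blockOf n γ j := by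
        have h1 := haS.1; have h2 := hbS.1
        simp only [blockOf, Set.mem_setOf_eq] at h1 h2 ⊢
        omega
      have h1 : (w.symm a : ℕ) ≤ (w.symm k : ℕ) := by
        rcases eq_or_lt_of_le hak with h | h
        · rw [h]
        · exact le_of_lt (hw' j a haS.1 k hkγ h)
      have h2 : (w.symm k : ℕ) ≤ (w.symm b : ℕ) := by
        rcases eq_or_lt_of_le hkb with h | h
        · rw [h]
        · exact le_of_lt (hw' j k hkγ b hbS.1 h)
      refine ⟨hkγ, ?_⟩
      have ha2 := haS.2; have hb2 := hbS.2
      simp only [blockOf, Set.mem_setOf_eq] at ha2 hb2 ⊢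
      omega
end

section
/- Let β = (n₁, ..., n_r) and γ = (m₁, ..., m_s) be compositions of n. The number of elements of W^{β,γ} (permutations w of [1,n] increasing on each block of β with w⁻¹ increasing on each block of γ) equals the number of r×s non-negative integer matrices with row sums n₁, ..., n_r and column sums m₁, ..., m_s. In particular, if β = γ = (1, 1, ..., 1), this number is n!. -/
/-!
Record a permutation `w` by the map `k ↦ (β-block of k, γ-block of w k)` into `Fin r ×ₗ Fin s`,
whose fibre sizes form the matrix `|I_i ∩ w⁻¹ J_j|`. The condition on `w⁻¹` says that `w⁻¹` is
the stable sort of `k ↦ γ-block of w k`; given it, the condition on `w` says that the recording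
map is monotone. A monotone map from `Fin n` to a finite chain is determined by its fibre sizes
(it lies below `a` exactly on the initial segment of length `#{f < a}`), and all fibre sizes
summing to `n` occur (sort any map with those fibres). So `w` is recovered from its matrix, and
every matrix arises.
-/

open Finset

section MonotoneFibers

variable {ι α : Type*} [Fintype ι]

theorem card_filter_comp_perm [DecidableEq α] (f : ι → α) (σ : Equiv.Perm ι) (a : α) :
    #{x | f (σ x) = a} = #{x | f x = a} :=
  card_equiv σ (by simp)

variable [LinearOrder α]

theorem card_filter_le_eq_card_filter_lt_add [DecidableEq ι] (f : ι → α) (a : α) :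
    #{x | f x ≤ a} = #{x | f x < a} + #{x | f x = a} := by
  rw [← card_union_of_disjoint (disjoint_filter.2 fun _ _ h => h.ne), ← filter_or]
  simp only [le_iff_lt_or_eq]

variable [Fintype α]

theorem card_filter_lt_eq_sum_card_fiber (f : ι → α) (a : α) :
    #{x | f x < a} = ∑ b ∈ {b | b < a}, #{x | f x = b} := by
  rw [card_eq_sum_card_fiberwise (f := f) (t := {b | b < a}) fun x hx => by simpa using hx]
  refine sum_congr rfl fun b hb => ?_
  rw [filter_filter]
  congr 1
  ext x
  simp only [mem_filter, mem_univ, true_and] at hb ⊢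
  exact ⟨And.right, fun hx => ⟨hx ▸ hb, hx⟩⟩

variable {m : ℕ}

theorem Monotone.eq_of_card_fiber_eq {f g : Fin m → α} (hf : Monotone f) (hg : Monotone g)
    (h : ∀ a, #{x | f x = a} = #{x | g x = a}) : f = g := by
  funext k
  refine eq_of_forall_gt_iff fun a => ?_
  rw [← Tuple.lt_card_lt_iff_apply_lt_of_monotone hf,
    ← Tuple.lt_card_lt_iff_apply_lt_of_monotone hg,
    card_filter_lt_eq_sum_card_fiber, card_filter_lt_eq_sum_card_fiber]
  simp only [h]

theorem exists_monotone_card_fiber (b : α → ℕ) (hb : ∑ a, b a = m) :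
    ∃ f : Fin m → α, Monotone f ∧ ∀ a, #{x | f x = a} = b a := by
  let e : (Σ a, Fin (b a)) ≃ Fin m := Fintype.equivFinOfCardEq (by simp [hb])
  let g : Fin m → α := fun x => (e.symm x).1
  have hg : ∀ a, #{x | g x = a} = b a := fun a => by
    rw [card_equiv e.symm (t := {y | y.1 = a}) (by simp [g])]
    have hfiber :
        ({y | y.1 = a} : Finset (Σ a, Fin (b a))) = ({a} : Finset α).sigma fun _ => univ := by
      ext y
      simp
    simp [hfiber]
  exact ⟨g ∘ Tuple.sort g, Tuple.monotone_sort g,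
    fun a => (card_filter_comp_perm g _ a).trans (hg a)⟩

end MonotoneFibers

section Blocks

variable {n r : ℕ} (β : Fin r → ℕ) (hβ : ∑ i, β i = n)

/-- The index of the block containing `k`, characterised by `mem_blockOf_iff`. -/
noncomputable def blockIdx : Fin n → Fin r :=
  (exists_monotone_card_fiber β hβ).choose

theorem monotone_blockIdx : Monotone (blockIdx β hβ) :=
  (exists_monotone_card_fiber β hβ).choose_spec.1

theorem card_blockIdx_fiber (i : Fin r) : #{k | blockIdx β hβ k = i} = β i :=
  (exists_monotone_card_fiber β hβ).choose_spec.2 i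

theorem mem_blockOf_iff (k : Fin n) (i : Fin r) : k ∈ blockOf n β i ↔ blockIdx β hβ k = i := by
  have hlt : offsetOf β i = #{k | blockIdx β hβ k < i} := by
    simp only [offsetOf, card_filter_lt_eq_sum_card_fiber, card_blockIdx_fiber]
  have hle : offsetOf β i + β i = #{k | blockIdx β hβ k ≤ i} := by
    rw [card_filter_le_eq_card_filter_lt_add, hlt, card_blockIdx_fiber]
  change offsetOf β i ≤ k ∧ k < offsetOf β i + β i ↔ _
  rw [hle, hlt, ← not_lt, Tuple.lt_card_le_iff_apply_le_of_monotone (monotone_blockIdx β hβ),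
    Tuple.lt_card_lt_iff_apply_lt_of_monotone (monotone_blockIdx β hβ)]
  exact ⟨fun h => le_antisymm h.2 (not_lt.1 h.1), fun h => ⟨h.not_lt, h.le⟩⟩

theorem forall_incOn_blockOf_iff (f : Fin n → Fin n) :
    (∀ i, IncOn f (blockOf n β i)) ↔
      ∀ x y, x < y → blockIdx β hβ x = blockIdx β hβ y → f x < f y := by
  simp only [IncOn, mem_blockOf_iff β hβ]
  exact ⟨fun h x y hxy hb => h _ x rfl y hb.symm hxy,
    fun h i x hx y hy hxy => h x y hxy (hx.trans hy.symm)⟩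

end Blocks

section BlockPair

variable {n r s : ℕ} (β : Fin r → ℕ) (hβ : ∑ i, β i = n) (γ : Fin s → ℕ) (hγ : ∑ j, γ j = n)

theorem forall_incOn_symm_blockOf_iff (w : Equiv.Perm (Fin n)) :
    (∀ j, IncOn w.symm (blockOf n γ j)) ↔ w.symm = Tuple.sort (blockIdx γ hγ ∘ w) := by
  rw [Tuple.eq_sort_iff, forall_incOn_blockOf_iff γ hγ]
  simp only [Function.comp_def, Equiv.apply_symm_apply]
  exact ⟨fun h => ⟨monotone_blockIdx γ hγ, h⟩, And.right⟩

theorem blockIdx_comp_sort_symm {c : Fin n → Fin s} (hc : ∀ j, #{k | c k = j} = γ j) :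
    blockIdx γ hγ ∘ (Tuple.sort c).symm = c := by
  have hsorted : c ∘ Tuple.sort c = blockIdx γ hγ :=
    (Tuple.monotone_sort c).eq_of_card_fiber_eq (monotone_blockIdx γ hγ) fun j => by
      rw [card_blockIdx_fiber, ← hc j]
      exact card_filter_comp_perm c _ j
  rw [← hsorted]
  ext k
  simp

noncomputable def blockPair (w : Equiv.Perm (Fin n)) (k : Fin n) : Fin r ×ₗ Fin s :=
  toLex (blockIdx β hβ k, blockIdx γ hγ (w k))

theorem forall_incOn_blockOf_iff_monotone_blockPair {w : Equiv.Perm (Fin n)}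
    (hw : ∀ j, IncOn w.symm (blockOf n γ j)) :
    (∀ i, IncOn w (blockOf n β i)) ↔ Monotone (blockPair β hβ γ hγ w) := by
  rw [forall_incOn_blockOf_iff β hβ]
  rw [forall_incOn_blockOf_iff γ hγ] at hw
  constructor
  · intro h x y hxy
    rcases (monotone_blockIdx β hβ hxy).lt_or_eq with hlt | heq
    · exact Prod.Lex.toLex_le_toLex.2 (Or.inl hlt)
    · refine Prod.Lex.toLex_le_toLex.2 (Or.inr ⟨heq, monotone_blockIdx γ hγ ?_⟩)
      rcases hxy.lt_or_eq with hxy | rfl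
      · exact (h x y hxy heq).le
      · rfl
  · intro h x y hxy heq
    have hγle : blockIdx γ hγ (w x) ≤ blockIdx γ hγ (w y) :=
      ((Prod.Lex.toLex_le_toLex.1 (h hxy.le)).resolve_left heq.not_lt).2
    by_contra hyx
    have hyx : w y < w x := (not_lt.1 hyx).lt_of_ne (w.injective.ne hxy.ne')
    have := hw (w y) (w x) hyx (le_antisymm (monotone_blockIdx γ hγ hyx.le) hγle)
    simp only [Equiv.symm_apply_apply] at this
    exact hxy.not_gt this

end BlockPair

section FiberMatrix

variable {n r s : ℕ}

def fiberMatrix (g : Fin n → Fin r ×ₗ Fin s) (i : Fin r) (j : Fin s) : ℕ :=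
  #{k | g k = toLex (i, j)}

theorem sum_fiberMatrix_row (g : Fin n → Fin r ×ₗ Fin s) (i : Fin r) :
    ∑ j, fiberMatrix g i j = #{k | (ofLex (g k)).1 = i} := by
  rw [card_eq_sum_card_fiberwise (f := fun k => (ofLex (g k)).2) (t := univ) (by simp)]
  refine sum_congr rfl fun j _ => ?_
  rw [filter_filter, fiberMatrix]
  congr 1
  ext k
  simp [← ofLex_inj, Prod.ext_iff]

theorem sum_fiberMatrix_col (g : Fin n → Fin r ×ₗ Fin s) (j : Fin s) :
    ∑ i, fiberMatrix g i j = #{k | (ofLex (g k)).2 = j} := by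
  rw [card_eq_sum_card_fiberwise (f := fun k => (ofLex (g k)).1) (t := univ) (by simp)]
  refine sum_congr rfl fun i _ => ?_
  rw [filter_filter, fiberMatrix]
  congr 1
  ext k
  simp [← ofLex_inj, Prod.ext_iff, and_comm]

end FiberMatrix

section Counting

variable {n r s : ℕ} (β : Fin r → ℕ) (γ : Fin s → ℕ)

theorem exists_incOnBlocks_fiberMatrix_eq (hβ : ∑ i, β i = n) (hγ : ∑ j, γ j = n)
    {B : Fin r → Fin s → ℕ} (hrow : ∀ i, ∑ j, B i j = β i) (hcol : ∀ j, ∑ i, B i j = γ j) :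
    ∃ w : Equiv.Perm (Fin n), ((∀ i, IncOn w (blockOf n β i)) ∧
      ∀ j, IncOn w.symm (blockOf n γ j)) ∧ fiberMatrix (blockPair β hβ γ hγ w) = B := by
  have hsum : ∑ p : Fin r ×ₗ Fin s, B (ofLex p).1 (ofLex p).2 = n := by
    rw [← hβ, ← Equiv.sum_comp toLex, Fintype.sum_prod_type]
    simp [hrow]
  obtain ⟨g, hg, hgB⟩ := exists_monotone_card_fiber _ hsum
  have hfib : fiberMatrix g = B := funext₂ fun i j => hgB (toLex (i, j))
  have hfst : (fun k => (ofLex (g k)).1) = blockIdx β hβ :=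
    (Prod.Lex.monotone_fst_ofLex.comp hg).eq_of_card_fiber_eq (monotone_blockIdx β hβ) fun i => by
      rw [card_blockIdx_fiber, ← hrow, ← hfib, sum_fiberMatrix_row]
      rfl
  set c := fun k => (ofLex (g k)).2
  have hc : ∀ j, #{k | c k = j} = γ j := fun j => by rw [← hcol, ← hfib, sum_fiberMatrix_col]
  set w := (Tuple.sort c).symm
  have hwg : blockPair β hβ γ hγ w = g := funext fun k => by
    rw [blockPair, ← hfst, ← Function.comp_apply (f := blockIdx γ hγ),
      blockIdx_comp_sort_symm γ hγ hc]
    rfl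
  have hwγ : ∀ j, IncOn w.symm (blockOf n γ j) := by
    rw [forall_incOn_symm_blockOf_iff γ hγ, blockIdx_comp_sort_symm γ hγ hc]
    rfl
  exact ⟨w, ⟨(forall_incOn_blockOf_iff_monotone_blockPair β hβ γ hγ hwγ).2 (hwg ▸ hg), hwγ⟩,
    hwg ▸ hfib⟩

theorem ncard_incOnBlocks_eq_ncard_contingencyTables (hβ : ∑ i, β i = n) (hγ : ∑ j, γ j = n) :
    {w : Equiv.Perm (Fin n) |
        (∀ i, IncOn w (blockOf n β i)) ∧ ∀ j, IncOn w.symm (blockOf n γ j)}.ncard =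
      {B : Fin r → Fin s → ℕ | (∀ i, ∑ j, B i j = β i) ∧ ∀ j, ∑ i, B i j = γ j}.ncard := by
  refine Set.ncard_congr (fun w _ => fiberMatrix (blockPair β hβ γ hγ w)) ?_ ?_ ?_
  · refine fun w _ => ⟨fun i => ?_, fun j => ?_⟩
    · rw [sum_fiberMatrix_row, ← card_blockIdx_fiber β hβ i]
      rfl
    · rw [sum_fiberMatrix_col, ← card_blockIdx_fiber γ hγ j]
      exact card_filter_comp_perm (blockIdx γ hγ) w j
  · rintro w w' ⟨hwβ, hwγ⟩ ⟨hw'β, hw'γ⟩ h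
    have hpair : blockPair β hβ γ hγ w = blockPair β hβ γ hγ w' :=
      ((forall_incOn_blockOf_iff_monotone_blockPair β hβ γ hγ hwγ).1 hwβ).eq_of_card_fiber_eq
        ((forall_incOn_blockOf_iff_monotone_blockPair β hβ γ hγ hw'γ).1 hw'β)
        fun p => congrFun (congrFun h (ofLex p).1) (ofLex p).2
    have hcol : blockIdx γ hγ ∘ w = blockIdx γ hγ ∘ w' :=
      funext fun k => congrArg (fun p => (ofLex p).2) (congrFun hpair k)
    rw [forall_incOn_symm_blockOf_iff γ hγ] at hwγ hw'γ
    exact Equiv.symm_bijective.injective (hwγ.trans (hcol ▸ hw'γ.symm))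
  · rintro B ⟨hrow, hcol⟩
    obtain ⟨w, hw, hB⟩ := exists_incOnBlocks_fiberMatrix_eq β γ hβ hγ hrow hcol
    exact ⟨w, hw, hB⟩

end Counting

theorem Set.Subsingleton.incOn {n : ℕ} {S : Set (Fin n)} (hS : S.Subsingleton)
    (f : Fin n → Fin n) : IncOn f S :=
  fun _ hx _ hy hxy => absurd (hS hx hy) hxy.ne

theorem subsingleton_blockOf {n r : ℕ} {δ : Fin r → ℕ} {i : Fin r} (hδ : δ i = 1) :
    (blockOf n δ i).Subsingleton := by
  intro x ⟨hx₁, hx₂⟩ y ⟨hy₁, hy₂⟩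
  rw [hδ] at hx₂ hy₂
  exact Fin.ext (by omega)

theorem stmt9 (n r s : ℕ) (β : Fin r → ℕ) (γ : Fin s → ℕ)
    (hβ : ∑ i, β i = n) (hγ : ∑ j, γ j = n) :
    {w : Equiv.Perm (Fin n) |
        (∀ i, IncOn w (blockOf n β i)) ∧ ∀ j, IncOn w.symm (blockOf n γ j)}.ncard =
      {B : Fin r → Fin s → ℕ |
        (∀ i, ∑ j, B i j = β i) ∧ ∀ j, ∑ i, B i j = γ j}.ncard ∧
    ∀ δ : Fin n → ℕ, (∀ i, δ i = 1) →
      {w : Equiv.Perm (Fin n) |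
        (∀ i, IncOn w (blockOf n δ i)) ∧
          ∀ j, IncOn w.symm (blockOf n δ j)}.ncard = n.factorial := by
  refine ⟨ncard_incOnBlocks_eq_ncard_contingencyTables β γ hβ hγ, fun δ hδ => ?_⟩
  have hall : ∀ (f : Fin n → Fin n) i, IncOn f (blockOf n δ i) :=
    fun f i => (subsingleton_blockOf (hδ i)).incOn f
  rw [Set.eq_univ_of_forall fun w => Set.mem_ofPred.2 ⟨hall w, hall w.symm⟩, Set.ncard_univ,
    Nat.card_perm,
    Nat.card_eq_fintype_card, Fintype.card_fin]
end

section
/- Let w be a permutation of [1, n], and let β = (n₁, ..., n_r), γ = (m₁, ..., m_s) be compositions of n with blocks I₁, ..., I_r and J₁, ..., J_s. Suppose w is increasing on each I_i and w⁻¹ is increasing on each J_j. Then w is uniquely determined by the matrix (|I_i ∩ w⁻¹(J_j)|)_{i,j}; that is, if w' is another such permutation with |I_i ∩ w'⁻¹(J_j)| = |I_i ∩ w⁻¹(J_j)| for all i, j, then w = w'. -/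
/-- The `i`-th block as a `Finset`. -/
def blk (n : ℕ) {r : ℕ} (β : Fin r → ℕ) (i : Fin r) : Finset (Fin n) :=
  Finset.univ.filter fun k => offsetOf β i ≤ (k : ℕ) ∧ (k : ℕ) < offsetOf β i + β i

lemma mem_blk {n r : ℕ} {β : Fin r → ℕ} {i : Fin r} {k : Fin n} :
    k ∈ blk n β i ↔ k ∈ blockOf n β i := by
  simp [blk, blockOf]

/-- The matrix of block intersections. -/
def Mmat (n : ℕ) {r s : ℕ} (β : Fin r → ℕ) (γ : Fin s → ℕ) (u : Equiv.Perm (Fin n))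
    (i : Fin r) (j : Fin s) : ℕ :=
  (Finset.univ.filter fun k => k ∈ blk n β i ∧ u k ∈ blk n γ j).card

lemma offset_succ {r : ℕ} (a : Fin r → ℕ) (i : Fin r) :
    offsetOf a i + a i = ∑ x ∈ Finset.univ.filter (fun x => x ≤ i), a x := by
  have h : Finset.univ.filter (fun x => x ≤ i) = insert i (Finset.univ.filter (fun x => x < i)) := by
    ext x
    simp [le_iff_lt_or_eq, or_comm]
  rw [h, Finset.sum_insert (by simp), offsetOf, add_comm]

lemma offset_add_le {r : ℕ} (a : Fin r → ℕ) {i j : Fin r} (h : i < j) :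
    offsetOf a i + a i ≤ offsetOf a j := by
  rw [offset_succ]
  apply Finset.sum_le_sum_of_subset
  intro x hx
  simp only [Finset.mem_filter, Finset.mem_univ, true_and] at hx ⊢
  exact lt_of_le_of_lt hx h

lemma offset_mono {r : ℕ} (a : Fin r → ℕ) {i j : Fin r} (h : i ≤ j) :
    offsetOf a i ≤ offsetOf a j := by
  apply Finset.sum_le_sum_of_subset
  intro x hx
  simp only [Finset.mem_filter, Finset.mem_univ, true_and] at hx ⊢
  exact lt_of_lt_of_le hx h

lemma uniq_block {r : ℕ} (a : Fin r → ℕ) {i j : Fin r} {t : ℕ}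
    (hi : offsetOf a i ≤ t ∧ t < offsetOf a i + a i)
    (hj : offsetOf a j ≤ t ∧ t < offsetOf a j + a j) : i = j := by
  by_contra hne
  rcases lt_or_gt_of_ne hne with h | h
  · have := offset_add_le a h; omega
  · have := offset_add_le a h; omega

lemma exists_block {r : ℕ} (a : Fin r → ℕ) {t : ℕ} (ht : t < ∑ i, a i) :
    ∃ i, offsetOf a i ≤ t ∧ t < offsetOf a i + a i := by
  have hr : 0 < r := by
    rcases Nat.eq_zero_or_pos r with h | h
    · subst h; simp at ht
    · exact h
  have h0 : offsetOf a ⟨0, hr⟩ = 0 := by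
    simp only [offsetOf]
    convert Finset.sum_empty
    ext x
    simp [Fin.lt_def]
  set S := Finset.univ.filter (fun i => offsetOf a i ≤ t) with hS
  have hne : S.Nonempty := ⟨⟨0, hr⟩, by simp [hS, h0]⟩
  set i := S.max' hne with hidef
  have hi : offsetOf a i ≤ t := by
    have := S.max'_mem hne
    simp [hS] at this
    exact this
  refine ⟨i, hi, ?_⟩
  by_contra h'
  push_neg at h'
  by_cases hcase : i.1 + 1 < r
  · set i' : Fin r := ⟨i.1 + 1, hcase⟩ with hi'
    have key : offsetOf a i' = offsetOf a i + a i := by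
      rw [offset_succ, offsetOf]
      apply Finset.sum_congr _ (fun _ _ => rfl)
      ext x
      simp only [Finset.mem_filter, Finset.mem_univ, true_and, Fin.lt_def, Fin.le_def, hi']
      omega
    have : i' ∈ S := by simp [hS]; omega
    have := S.le_max' i' this
    rw [← hidef] at this
    simp [Fin.le_def, hi'] at this
  · have hlast : i.1 + 1 = r := by omega
    have : Finset.univ.filter (fun x => x ≤ i) = (Finset.univ : Finset (Fin r)) := by
      ext x
      simp only [Finset.mem_filter, Finset.mem_univ, true_and, Fin.le_def, iff_true]
      omega
    have hsum : offsetOf a i + a i = ∑ x, a x := by rw [offset_succ, this]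
    omega

lemma inc_iff {n : ℕ} {u : Equiv.Perm (Fin n)} {S : Set (Fin n)} (h : IncOn u S)
    {x k : Fin n} (hx : x ∈ S) (hk : k ∈ S) : u x ≤ u k ↔ x ≤ k := by
  constructor
  · intro hle
    by_contra hlt
    push_neg at hlt
    exact absurd (h k hk x hx hlt) (not_lt.mpr hle)
  · intro hle
    rcases lt_or_eq_of_le hle with h' | h'
    · exact (h x hx k hk h').le
    · rw [h']

lemma card_below {n r s : ℕ} (β : Fin r → ℕ) (γ : Fin s → ℕ) (hγ : ∑ j, γ j = n)
    (u : Equiv.Perm (Fin n)) (i : Fin r) (j : Fin s) :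
    (Finset.univ.filter fun x => x ∈ blk n β i ∧ (u x : ℕ) < offsetOf γ j).card
      = ∑ j' ∈ Finset.univ.filter (· < j), Mmat n β γ u i j' := by
  have hdisj : ∀ j₁ ∈ Finset.univ.filter (· < j), ∀ j₂ ∈ Finset.univ.filter (· < j), j₁ ≠ j₂ →
      Disjoint (Finset.univ.filter fun x => x ∈ blk n β i ∧ u x ∈ blk n γ j₁)
        (Finset.univ.filter fun x => x ∈ blk n β i ∧ u x ∈ blk n γ j₂) := by
    intro j₁ _ j₂ _ hne
    rw [Finset.disjoint_left]
    intro x hx1 hx2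
    simp only [Finset.mem_filter, Finset.mem_univ, true_and, blk] at hx1 hx2
    exact hne (uniq_block γ hx1.2 hx2.2)
  rw [show (∑ j' ∈ Finset.univ.filter (· < j), Mmat n β γ u i j')
      = ((Finset.univ.filter (· < j)).biUnion
          (fun j' => Finset.univ.filter fun x => x ∈ blk n β i ∧ u x ∈ blk n γ j')).card
    from (Finset.card_biUnion hdisj).symm]
  congr 1
  ext x
  simp only [Finset.mem_filter, Finset.mem_univ, true_and, Finset.mem_biUnion]
  constructor
  · rintro ⟨hxi, hlt⟩
    obtain ⟨j', hj'⟩ := exists_block γ (t := (u x : ℕ)) (by rw [hγ]; exact (u x).isLt)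
    refine ⟨j', ?_, hxi, by simp [blk]; exact hj'⟩
    by_contra hjj
    push_neg at hjj
    have := offset_mono γ hjj
    omega
  · rintro ⟨j', hj', hxi, hxj'⟩
    simp only [blk, Finset.mem_filter, Finset.mem_univ, true_and] at hxj'
    have := offset_add_le γ hj'
    exact ⟨hxi, by omega⟩

lemma count_eq {n r s : ℕ} (β : Fin r → ℕ) (γ : Fin s → ℕ) (hγ : ∑ j, γ j = n)
    (u : Equiv.Perm (Fin n)) (hu : ∀ i, IncOn u (blockOf n β i))
    {i : Fin r} {j : Fin s} {k : Fin n} (hki : k ∈ blk n β i) (hkj : u k ∈ blk n γ j) :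
    (k : ℕ) + 1 = offsetOf β i + (∑ j' ∈ Finset.univ.filter (· < j), Mmat n β γ u i j')
      + (Finset.univ.filter fun x => x ∈ blk n β i ∧ u x ∈ blk n γ j ∧ x ≤ k).card := by
  simp only [blk, Finset.mem_filter, Finset.mem_univ, true_and] at hki hkj
  have hok : offsetOf β i ≤ (k : ℕ) := hki.1
  -- card of S0
  have hS0 : (Finset.univ.filter fun x => x ∈ blk n β i ∧ x ≤ k).card
      = (k : ℕ) + 1 - offsetOf β i := by
    have : (Finset.univ.filter fun x => x ∈ blk n β i ∧ x ≤ k)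
        = Finset.Icc ⟨offsetOf β i, lt_of_le_of_lt hok k.isLt⟩ k := by
      ext x
      simp only [Finset.mem_filter, Finset.mem_univ, true_and, Finset.mem_Icc, blk,
        Fin.le_def]
      constructor
      · rintro ⟨⟨h1, _⟩, h3⟩; exact ⟨h1, h3⟩
      · rintro ⟨h1, h3⟩; exact ⟨⟨h1, by omega⟩, h3⟩
    rw [this, Fin.card_Icc]
  -- S1 = S0 via inc_iff
  have hS1 : (Finset.univ.filter fun x => x ∈ blk n β i ∧ u x ≤ u k)
      = (Finset.univ.filter fun x => x ∈ blk n β i ∧ x ≤ k) := by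
    ext x
    simp only [Finset.mem_filter, Finset.mem_univ, true_and]
    constructor
    · rintro ⟨hx, hle⟩
      exact ⟨hx, (inc_iff (hu i) (mem_blk.mp hx) (mem_blk.mp (by simp [blk]; exact hki))).mp hle⟩
    · rintro ⟨hx, hle⟩
      exact ⟨hx, (inc_iff (hu i) (mem_blk.mp hx) (mem_blk.mp (by simp [blk]; exact hki))).mpr hle⟩
  -- split S1 = S2 ∪ S3
  have hsplit : (Finset.univ.filter fun x => x ∈ blk n β i ∧ u x ≤ u k)
      = (Finset.univ.filter fun x => x ∈ blk n β i ∧ (u x : ℕ) < offsetOf γ j)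
        ∪ (Finset.univ.filter fun x => x ∈ blk n β i ∧ u x ∈ blk n γ j ∧ x ≤ k) := by
    ext x
    simp only [Finset.mem_filter, Finset.mem_univ, true_and, Finset.mem_union]
    constructor
    · rintro ⟨hx, hle⟩
      by_cases hlow : (u x : ℕ) < offsetOf γ j
      · exact Or.inl ⟨hx, hlow⟩
      · push_neg at hlow
        have hxj : u x ∈ blk n γ j := by
          simp only [blk, Finset.mem_filter, Finset.mem_univ, true_and]
          have : (u x : ℕ) ≤ (u k : ℕ) := hle
          omega
        exact Or.inr ⟨hx, hxj,
          (inc_iff (hu i) (mem_blk.mp hx) (mem_blk.mp (by simp [blk]; exact hki))).mp hle⟩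
    · rintro (⟨hx, hlow⟩ | ⟨hx, _, hle⟩)
      · refine ⟨hx, ?_⟩
        have : (u x : ℕ) < (u k : ℕ) := by omega
        exact le_of_lt this
      · exact ⟨hx, (inc_iff (hu i) (mem_blk.mp hx) (mem_blk.mp (by simp [blk]; exact hki))).mpr hle⟩
  have hdisj : Disjoint
      (Finset.univ.filter fun x => x ∈ blk n β i ∧ (u x : ℕ) < offsetOf γ j)
      (Finset.univ.filter fun x => x ∈ blk n β i ∧ u x ∈ blk n γ j ∧ x ≤ k) := by
    rw [Finset.disjoint_left]
    intro x hx1 hx2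
    simp only [Finset.mem_filter, Finset.mem_univ, true_and, blk] at hx1 hx2
    omega
  have hcards := congrArg Finset.card hsplit
  rw [Finset.card_union_of_disjoint hdisj, hS1, hS0, card_below β γ hγ u i j] at hcards
  omega

lemma Mmat_symm {n r s : ℕ} (β : Fin r → ℕ) (γ : Fin s → ℕ) (u : Equiv.Perm (Fin n))
    (i : Fin r) (j : Fin s) :
    Mmat n γ β u.symm j i = Mmat n β γ u i j := by
  rw [Mmat, Mmat, eq_comm]
  apply Finset.card_equiv (u : Fin n ≃ Fin n)
  intro x
  simp only [Finset.mem_filter, Finset.mem_univ, true_and, Equiv.coe_fn_mk,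
    Equiv.symm_apply_apply]
  tauto

lemma C_symm {n r s : ℕ} (β : Fin r → ℕ) (γ : Fin s → ℕ) (u : Equiv.Perm (Fin n))
    (hu : ∀ i, IncOn u (blockOf n β i)) {i : Fin r} {j : Fin s} {k : Fin n}
    (hki : k ∈ blk n β i) :
    (Finset.univ.filter fun y => y ∈ blk n γ j ∧ u.symm y ∈ blk n β i ∧ y ≤ u k).card
      = (Finset.univ.filter fun x => x ∈ blk n β i ∧ u x ∈ blk n γ j ∧ x ≤ k).card := by
  rw [eq_comm]
  apply Finset.card_equiv (u : Fin n ≃ Fin n)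
  intro x
  simp only [Finset.mem_filter, Finset.mem_univ, true_and, Equiv.coe_fn_mk, Equiv.symm_apply_apply]
  constructor
  · rintro ⟨h1, h2, h3⟩
    exact ⟨h2, h1, (inc_iff (hu i) (mem_blk.mp h1) (mem_blk.mp hki)).mpr h3⟩
  · rintro ⟨h2, h1, h3⟩
    exact ⟨h1, h2, (inc_iff (hu i) (mem_blk.mp h1) (mem_blk.mp hki)).mp h3⟩

theorem stmt10 (n r s : ℕ) (β : Fin r → ℕ) (γ : Fin s → ℕ)
    (hβ : ∑ i, β i = n) (hγ : ∑ j, γ j = n)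
    (w w' : Equiv.Perm (Fin n))
    (hw : ∀ i, IncOn w (blockOf n β i))
    (hw' : ∀ j, IncOn w.symm (blockOf n γ j))
    (hv : ∀ i, IncOn w' (blockOf n β i))
    (hv' : ∀ j, IncOn w'.symm (blockOf n γ j))
    (heq : ∀ i j,
      Set.ncard {k : Fin n | k ∈ blockOf n β i ∧ w k ∈ blockOf n γ j} =
      Set.ncard {k : Fin n | k ∈ blockOf n β i ∧ w' k ∈ blockOf n γ j}) :
    w = w' := by
  -- translate heq to Mmat
  have heqM : ∀ i j, Mmat n β γ w i j = Mmat n β γ w' i j := by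
    intro i j
    have e1 : {k : Fin n | k ∈ blockOf n β i ∧ w k ∈ blockOf n γ j}
        = ↑(Finset.univ.filter fun k => k ∈ blk n β i ∧ w k ∈ blk n γ j) := by
      ext x; simp [mem_blk]
    have e2 : {k : Fin n | k ∈ blockOf n β i ∧ w' k ∈ blockOf n γ j}
        = ↑(Finset.univ.filter fun k => k ∈ blk n β i ∧ w' k ∈ blk n γ j) := by
      ext x; simp [mem_blk]
    have := heq i j
    rw [e1, e2, Set.ncard_coe_finset, Set.ncard_coe_finset] at this
    exact this
  apply Equiv.ext
  intro k
  obtain ⟨i, hi⟩ := exists_block β (t := (k : ℕ)) (by rw [hβ]; exact k.isLt)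
  have hki : k ∈ blk n β i := by simp [blk]; exact hi
  obtain ⟨j, hj⟩ := exists_block γ (t := ((w k : Fin n) : ℕ)) (by rw [hγ]; exact (w k).isLt)
  have hkj : w k ∈ blk n γ j := by simp [blk]; exact hj
  obtain ⟨j₂, hj₂⟩ := exists_block γ (t := ((w' k : Fin n) : ℕ)) (by rw [hγ]; exact (w' k).isLt)
  have hkj₂ : w' k ∈ blk n γ j₂ := by simp [blk]; exact hj₂
  -- counting equations for w
  have hw1 := count_eq β γ hγ w hw hki hkj
  have hw2 := count_eq γ β hβ w.symm hw' (i := j) (j := i) (k := w k) hkj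
    (by simp only [Equiv.symm_apply_apply]; exact hki)
  have hv1 := count_eq β γ hγ w' hv hki hkj₂
  have hv2 := count_eq γ β hβ w'.symm hv' (i := j₂) (j := i) (k := w' k) hkj₂
    (by simp only [Equiv.symm_apply_apply]; exact hki)
  -- the shared count C bounds
  set C := (Finset.univ.filter fun x => x ∈ blk n β i ∧ w x ∈ blk n γ j ∧ x ≤ k).card with hC
  set C₂ := (Finset.univ.filter fun x => x ∈ blk n β i ∧ w' x ∈ blk n γ j₂ ∧ x ≤ k).card with hC₂
  have hC1 : 1 ≤ C := Finset.card_pos.mpr ⟨k, by simp [hki, hkj]⟩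
  have hC2 : C ≤ Mmat n β γ w i j := by
    apply Finset.card_le_card
    intro x hx
    simp only [Finset.mem_filter, Finset.mem_univ, true_and, Mmat] at hx ⊢
    exact ⟨hx.1, hx.2.1⟩
  have hC₂1 : 1 ≤ C₂ := Finset.card_pos.mpr ⟨k, by simp [hki, hkj₂]⟩
  have hC₂2 : C₂ ≤ Mmat n β γ w' i j₂ := by
    apply Finset.card_le_card
    intro x hx
    simp only [Finset.mem_filter, Finset.mem_univ, true_and, Mmat] at hx ⊢
    exact ⟨hx.1, hx.2.1⟩
  -- j = j₂ by uniqueness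
  have hsum2 : ∀ j' : Fin s, (∑ x ∈ Finset.univ.filter (· < j'), Mmat n β γ w' i x)
      = ∑ x ∈ Finset.univ.filter (· < j'), Mmat n β γ w i x := by
    intro j'
    exact Finset.sum_congr rfl (fun x _ => (heqM i x).symm)
  have hOeq : ∀ jx : Fin s, offsetOf (fun j' => Mmat n β γ w i j') jx
      = ∑ j' ∈ Finset.univ.filter (· < jx), Mmat n β γ w i j' := fun _ => rfl
  have hjj : j = j₂ := by
    apply uniq_block (fun j' => Mmat n β γ w i j') (t := (k : ℕ) - offsetOf β i)
    · rw [hOeq]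
      omega
    · rw [hOeq]
      rw [hsum2 j₂] at hv1
      have hM : Mmat n β γ w i j₂ = Mmat n β γ w' i j₂ := heqM i j₂
      omega
  subst hjj
  -- now combine the four equations
  rw [C_symm β γ w hw hki, ← hC] at hw2
  rw [C_symm β γ w' hv hki, ← hC₂] at hv2
  have hMs : ∀ i' : Fin r, Mmat n γ β w.symm j i' = Mmat n β γ w i' j := fun i' => Mmat_symm β γ w i' j
  have hMs' : ∀ i' : Fin r, Mmat n γ β w'.symm j i' = Mmat n β γ w' i' j := fun i' => Mmat_symm β γ w' i' j
  have hQ : (∑ x ∈ Finset.univ.filter (· < i), Mmat n γ β w.symm j x)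
      = ∑ x ∈ Finset.univ.filter (· < i), Mmat n β γ w x j :=
    Finset.sum_congr rfl (fun x _ => hMs x)
  have hQ' : (∑ x ∈ Finset.univ.filter (· < i), Mmat n γ β w'.symm j x)
      = ∑ x ∈ Finset.univ.filter (· < i), Mmat n β γ w x j := by
    refine Finset.sum_congr rfl (fun x _ => ?_)
    rw [hMs' x, ← heqM x j]
  rw [hQ] at hw2
  rw [hQ'] at hv2
  rw [hsum2 j] at hv1
  have : (w k : ℕ) = (w' k : ℕ) := by omega
  exact Fin.ext this
end
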